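/- Let g(x) = 1/(ε + ‖x‖^α) on ℝ² with ε > 0 and α > 2. Then g is integrable and square-integrable on ℝ², and the spatio-temporal correlation coefficient for an ALOHA ad hoc network with p = 1, ζ(v) = (∫_{ℝ²} g(x) g(x − v) dx) / (E[h²] ∫_{ℝ²} g(x)² dx), satisfies ζ(0) = 1/E[h²], 0 < ζ(v) ≤ 1/E[h²] for all v, and ζ(v) → 0 as ‖v‖ → ∞. -/

import Mathlib

open MeasureTheory Real Filter Topology Bornology Module

/-! Since `1 / (ε + ‖x‖ ^ α) ≤ C (1 + ‖x‖) ^ (-α)` and `α > 2 = dim ℝ²`, the kernel `g`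
is integrable; as it is also bounded by `1 / ε`, so are `g²` and every product `g · g(· - v)`.
The autocorrelation `∫ g(x) g(x - v) dx` is positive because its integrand is, is at most
`∫ g²` by the pointwise AM-GM inequality and translation invariance of Lebesgue measure, and
tends to `0` as `‖v‖ → ∞` by dominated convergence (dominated by `g / ε`, while
`g(x - v) → 0` for each `x`). -/

lemma one_add_rpow_le_two_rpow_mul {r α : ℝ} (hr : 0 ≤ r) (hα : 0 ≤ α) :
    (1 + r) ^ α ≤ 2 ^ α * (1 + r ^ α) := by
  have hmax : 1 + r ≤ 2 * max 1 r := by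
    linarith [le_max_left 1 r, le_max_right 1 r]
  have hmax_rpow : max 1 r ^ α ≤ 1 + r ^ α := by
    rcases le_total r 1 with h | h
    · rw [max_eq_left h, one_rpow]
      linarith [rpow_nonneg hr α]
    · rw [max_eq_right h]
      linarith
  calc (1 + r) ^ α ≤ (2 * max 1 r) ^ α := rpow_le_rpow (by positivity) hmax hα
    _ = 2 ^ α * max 1 r ^ α := mul_rpow zero_le_two (by positivity)
    _ ≤ 2 ^ α * (1 + r ^ α) := by gcongr

lemma one_div_add_rpow_le {ε r α : ℝ} (hε : 0 < ε) (hr : 0 ≤ r) (hα : 0 ≤ α) :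
    1 / (ε + r ^ α) ≤ 2 ^ α / min ε 1 * (1 + r) ^ (-α) := by
  have hm : 0 < min ε 1 := lt_min hε one_pos
  have hrα : 0 ≤ r ^ α := rpow_nonneg hr α
  have hscale : min ε 1 * (1 + r ^ α) ≤ ε + r ^ α := by
    nlinarith [min_le_left ε 1, min_le_right ε 1]
  rw [rpow_neg (by positivity), div_mul_eq_mul_div, ← div_eq_mul_inv, div_div,
    div_le_div_iff₀ (by positivity) (by positivity), one_mul]
  calc (1 + r) ^ α * min ε 1 ≤ 2 ^ α * (1 + r ^ α) * min ε 1 := by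
        gcongr; exact one_add_rpow_le_two_rpow_mul hr hα
    _ = 2 ^ α * (min ε 1 * (1 + r ^ α)) := by ring
    _ ≤ 2 ^ α * (ε + r ^ α) := by gcongr

section Kernel

variable {E : Type*} [NormedAddCommGroup E] {ε α : ℝ}

lemma one_div_add_norm_rpow_pos (hε : 0 < ε) (x : E) : 0 < 1 / (ε + ‖x‖ ^ α) := by
  positivity

lemma one_div_add_norm_rpow_le (hε : 0 < ε) (x : E) : 1 / (ε + ‖x‖ ^ α) ≤ 1 / ε :=
  one_div_le_one_div_of_le hε (le_add_of_nonneg_right (by positivity))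

lemma continuous_one_div_add_norm_rpow (hε : 0 < ε) (hα : 0 ≤ α) :
    Continuous fun x : E => 1 / (ε + ‖x‖ ^ α) :=
  continuous_const.div (continuous_const.add (continuous_norm.rpow_const fun _ => Or.inr hα))
    fun x => by positivity

lemma tendsto_one_div_add_norm_rpow_cobounded (hα : 0 < α) :
    Tendsto (fun x : E => 1 / (ε + ‖x‖ ^ α)) (cobounded E) (𝓝 0) := by
  simp only [one_div]
  exact (tendsto_atTop_add_const_left _ ε
    ((tendsto_rpow_atTop hα).comp tendsto_norm_cobounded_atTop)).inv_tendsto_atTop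

lemma integrable_one_div_add_norm_rpow [NormedSpace ℝ E] [FiniteDimensional ℝ E]
    [MeasurableSpace E] [BorelSpace E] (μ : Measure E) [μ.IsAddHaarMeasure]
    (hε : 0 < ε) (hα : (finrank ℝ E : ℝ) < α) :
    Integrable (fun x : E => 1 / (ε + ‖x‖ ^ α)) μ := by
  have hα0 : 0 ≤ α := (Nat.cast_nonneg _).trans hα.le
  refine ((integrable_one_add_norm hα).const_mul (2 ^ α / min ε 1)).mono'
    (continuous_one_div_add_norm_rpow hε hα0).aestronglyMeasurable (ae_of_all _ fun x => ?_)
  rw [norm_of_nonneg (one_div_add_norm_rpow_pos hε x).le]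
  exact one_div_add_rpow_le hε (norm_nonneg x) hα0

end Kernel

section Autocorrelation

variable {E : Type*} [NormedAddCommGroup E] [MeasurableSpace E] {μ : Measure E} {f g : E → ℝ}

lemma integrable_mul_comp_sub_of_bounded [OpensMeasurableSpace E] {C : ℝ}
    (hf : Integrable f μ) (hg : Continuous g) (hgC : ∀ x, ‖g x‖ ≤ C) (v : E) :
    Integrable (fun x => f x * g (x - v)) μ :=
  hf.mul_bdd (hg.comp (continuous_sub_right v)).aestronglyMeasurable (ae_of_all _ fun _ => hgC _)

lemma integral_mul_comp_sub_pos [μ.IsOpenPosMeasure] (hg : Continuous g)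
    (hg_pos : ∀ x, 0 < g x) (v : E) (hgv : Integrable (fun x => g x * g (x - v)) μ) :
    0 < ∫ x, g x * g (x - v) ∂μ :=
  integral_pos_of_integrable_nonneg_nonzero (x := 0)
    (hg.mul (hg.comp (continuous_sub_right v))) hgv
    (fun x => (mul_pos (hg_pos x) (hg_pos _)).le) (mul_pos (hg_pos 0) (hg_pos _)).ne'

lemma integral_mul_comp_sub_le_integral_sq [MeasurableAdd E] [μ.IsAddRightInvariant] (v : E)
    (hg : Integrable (fun x => g x ^ 2) μ) (hgv : Integrable (fun x => g x * g (x - v)) μ) :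
    ∫ x, g x * g (x - v) ∂μ ≤ ∫ x, g x ^ 2 ∂μ := by
  have hg_sub : Integrable (fun x => g (x - v) ^ 2) μ := hg.comp_sub_right v
  calc ∫ x, g x * g (x - v) ∂μ ≤ ∫ x, (g x ^ 2 + g (x - v) ^ 2) / 2 ∂μ :=
        integral_mono hgv ((hg.add hg_sub).div_const 2)
          fun x => by nlinarith [sq_nonneg (g x - g (x - v))]
    _ = ∫ x, g x ^ 2 ∂μ := by
        rw [integral_div, integral_add hg hg_sub,
          integral_sub_right_eq_self (fun x => g x ^ 2) v]
        ring

lemma tendsto_integral_mul_comp_sub_cobounded [OpensMeasurableSpace E] {C : ℝ}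
    (hf : Integrable f μ) (hg : Continuous g) (hgC : ∀ x, ‖g x‖ ≤ C)
    (hg0 : Tendsto g (cobounded E) (𝓝 0)) :
    Tendsto (fun v => ∫ x, f x * g (x - v) ∂μ) (cobounded E) (𝓝 0) := by
  rw [← comap_norm_atTop, show (0 : ℝ) = ∫ _, 0 ∂μ by simp]
  refine tendsto_integral_filter_of_dominated_convergence (fun x => ‖f x‖ * C)
    (Eventually.of_forall fun v =>
      hf.aestronglyMeasurable.mul (hg.comp (continuous_sub_right v)).aestronglyMeasurable)
    (Eventually.of_forall fun v => ae_of_all _ fun x => ?_) (hf.norm.mul_const C)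
    (ae_of_all _ fun x => ?_)
  · rw [norm_mul]
    exact mul_le_mul_of_nonneg_left (hgC _) (norm_nonneg _)
  · rw [comap_norm_atTop]
    simpa using (hg0.comp (tendsto_const_sub_cobounded x)).const_mul (f x)

end Autocorrelation

/-- For `g x = 1/(ε + ‖x‖^α)` with `ε > 0`, `α > 2`: `g` and `g²` are
integrable on the plane, and the ad hoc (ALOHA, `p = 1`) spatio-temporal
interference correlation coefficient
`ζ(v) = (∫ g(x) g(x−v) dx)/(E[h²] ∫ g(x)² dx)` satisfies `ζ 0 = 1/E[h²]`,
`0 < ζ v ≤ 1/E[h²]` for all `v`, and `ζ v → 0` as `‖v‖ → ∞`. -/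
theorem stmt_15 (ε α Eh2 : ℝ) (hε : 0 < ε) (hα : 2 < α) (hEh2 : 1 ≤ Eh2)
    (g : EuclideanSpace ℝ (Fin 2) → ℝ)
    (hg : ∀ x, g x = 1 / (ε + ‖x‖ ^ α))
    (ζ : EuclideanSpace ℝ (Fin 2) → ℝ)
    (hζ : ∀ v, ζ v = (∫ x, g x * g (x - v)) / (Eh2 * ∫ x, (g x) ^ 2)) :
    Integrable g volume ∧ Integrable (fun x => (g x) ^ 2) volume ∧
    ζ 0 = 1 / Eh2 ∧
    (∀ v, 0 < ζ v ∧ ζ v ≤ 1 / Eh2) ∧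
    Tendsto ζ (Filter.comap norm Filter.atTop) (nhds 0) := by
  have hα0 : 0 < α := by linarith
  have hg' : g = fun x => 1 / (ε + ‖x‖ ^ α) := funext hg
  have hgpos (x) : 0 < g x := hg' ▸ one_div_add_norm_rpow_pos hε x
  have hgC (x) : ‖g x‖ ≤ 1 / ε := by
    rw [norm_of_nonneg (hgpos x).le, hg]; exact one_div_add_norm_rpow_le hε x
  have hcont : Continuous g := hg' ▸ continuous_one_div_add_norm_rpow hε hα0.le
  have hint : Integrable g := by
    rw [hg']; exact integrable_one_div_add_norm_rpow volume hε (by simpa using hα)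
  have hg0 : Tendsto g (cobounded _) (𝓝 0) :=
    hg' ▸ tendsto_one_div_add_norm_rpow_cobounded hα0
  have hprod := integrable_mul_comp_sub_of_bounded hint hcont hgC
  have hN (v) : 0 < ∫ x, g x * g (x - v) := integral_mul_comp_sub_pos hcont hgpos v (hprod v)
  have hsq : Integrable (fun x => g x ^ 2) := by simpa only [sq, sub_zero] using hprod 0
  have hD : 0 < ∫ x, g x ^ 2 := by simpa only [sq, sub_zero] using hN 0
  have hEh2D : 0 < Eh2 * ∫ x, g x ^ 2 := mul_pos (by linarith) hD
  have hζ0 : ζ 0 = 1 / Eh2 := by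
    rw [hζ]; simp only [sub_zero, ← sq]; field_simp
  refine ⟨hint, hsq, hζ0, fun v => ⟨?_, ?_⟩, ?_⟩
  · rw [hζ]; exact div_pos (hN v) hEh2D
  · calc ζ v ≤ ζ 0 := by
          rw [hζ, hζ]
          simp only [sub_zero, ← sq]
          exact div_le_div_of_nonneg_right
            (integral_mul_comp_sub_le_integral_sq v hsq (hprod v)) hEh2D.le
      _ = 1 / Eh2 := hζ0
  · rw [funext hζ, comap_norm_atTop]
    simpa using (tendsto_integral_mul_comp_sub_cobounded hint hcont hgC hg0).div_const _
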